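/- arXiv:1209.5775 — 2 statements merged into one kernel-verified Lean document; each statement's English description precedes it below -/
import Mathlib

section
/- Let g ∈ C²((a,b)) ∩ C¹([a,b)) satisfy g''(x) + a₁(x)g'(x) + a₀(x)g(x) ≤ 0 on (a,b), where |a₁|, |a₀| ≤ C. Then there exists δ = δ(C) > 0 such that on any subinterval [c,d] ⊆ [a,b) with d - c < δ, if g(c) ≥ 0 and g(d) ≥ 0 then g ≥ 0 on [c,d]. -/
/-!
Compare `g` with `w x = 1 - C (x - c)²`, which on an interval of length `< min (1/(2C)) 1`
is positive and satisfies `L w < 0` for `L f = f'' + a₁ f' + a₀ f`. If `g` were negative somewhere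
in `[c, d]`, the minimum `λ < 0` of `g / w` would be attained at an interior point `x₀`, where
`h = g - λ w ≥ 0` has a local minimum with value `0`; hence `L h (x₀) = h''(x₀) ≥ 0`, whereas
`L h = L g - λ L w < 0` there.
-/

open Set Topology Filter

theorem IsLocalMin.deriv_deriv_nonneg {f : ℝ → ℝ} {x₀ : ℝ} (hmin : IsLocalMin f x₀)
    (hc : ContinuousAt f x₀) : 0 ≤ deriv (deriv f) x₀ := by
  by_contra! hneg
  -- a negative second derivative makes `x₀` a local maximum as well, so `f` is locally constant
  have hmax : IsLocalMax f x₀ := isLocalMax_of_deriv_deriv_neg hneg hmin.deriv_eq_zero hc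
  have hconst : f =ᶠ[𝓝 x₀] fun _ => f x₀ := (hmin.and hmax).mono fun x hx => le_antisymm hx.2 hx.1
  have hderiv : deriv f =ᶠ[𝓝 x₀] fun _ => 0 :=
    hconst.eventuallyEq_nhds.mono fun x hx => by rw [hx.deriv_eq, deriv_const]
  rw [hderiv.deriv_eq, deriv_const] at hneg
  exact hneg.false

noncomputable def secondOrderOp (a1 a0 f : ℝ → ℝ) (x : ℝ) : ℝ :=
  iteratedDeriv 2 f x + a1 x * deriv f x + a0 x * f x

theorem secondOrderOp_eq (a1 a0 f : ℝ → ℝ) (x : ℝ) :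
    secondOrderOp a1 a0 f x = deriv (deriv f) x + a1 x * deriv f x + a0 x * f x := by
  rw [secondOrderOp, iteratedDeriv_succ, iteratedDeriv_one]

theorem secondOrderOp_sub_mul {g w : ℝ → ℝ} {x : ℝ} (a1 a0 : ℝ → ℝ) (lam : ℝ)
    (hg : ContDiffAt ℝ 2 g x) (hw : ContDiffAt ℝ 2 w x) :
    secondOrderOp a1 a0 (fun y => g y - lam * w y) x =
      secondOrderOp a1 a0 g x - lam * secondOrderOp a1 a0 w x := by
  have hderiv : deriv (fun y => g y - lam * w y) =ᶠ[𝓝 x] fun y => deriv g y - lam * deriv w y :=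
    ((hg.eventually (by simp)).and (hw.eventually (by simp))).mono fun y ⟨hgy, hwy⟩ =>
      ((hgy.differentiableAt two_ne_zero).hasDerivAt.sub
        ((hwy.differentiableAt two_ne_zero).hasDerivAt.const_mul lam)).deriv
  have hg' : DifferentiableAt ℝ (deriv g) x :=
    (hg.derivWithin (m := 1) le_rfl).differentiableAt one_ne_zero
  have hw' : DifferentiableAt ℝ (deriv w) x :=
    (hw.derivWithin (m := 1) le_rfl).differentiableAt one_ne_zero
  simp only [secondOrderOp_eq]
  rw [hderiv.deriv_eq, hderiv.eq_of_nhds, deriv_fun_sub hg' (hw'.const_mul lam),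
    deriv_const_mul lam hw']
  ring

theorem IsLocalMin.secondOrderOp_nonneg {h : ℝ → ℝ} {x₀ : ℝ} (a1 a0 : ℝ → ℝ)
    (hmin : IsLocalMin h x₀) (hc : ContinuousAt h x₀) (hzero : h x₀ = 0) :
    0 ≤ secondOrderOp a1 a0 h x₀ := by
  rw [secondOrderOp_eq, hmin.deriv_eq_zero, hzero, mul_zero, mul_zero, add_zero, add_zero]
  exact hmin.deriv_deriv_nonneg hc

theorem exists_isLocalMin_sub_mul_of_neg {g w : ℝ → ℝ} {c d : ℝ}
    (hg : ContinuousOn g (Icc c d)) (hw : ContinuousOn w (Icc c d))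
    (hw_pos : ∀ x ∈ Icc c d, 0 < w x) (hgc : 0 ≤ g c) (hgd : 0 ≤ g d)
    (hneg : ∃ z ∈ Icc c d, g z < 0) :
    ∃ x₀ ∈ Ioo c d, ∃ lam < 0, g x₀ = lam * w x₀ ∧ IsLocalMin (fun x => g x - lam * w x) x₀ := by
  obtain ⟨z, hz, hgz⟩ := hneg
  obtain ⟨x₀, hx₀, hmin⟩ := isCompact_Icc.exists_isMinOn ⟨z, hz⟩
    (hg.div hw fun x hx => (hw_pos x hx).ne')
  set lam := g x₀ / w x₀
  have hlam : lam < 0 := (hmin hz).trans_lt (div_neg_of_neg_of_pos hgz (hw_pos z hz))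
  have hlam_le : ∀ x ∈ Icc c d, lam * w x ≤ g x := fun x hx =>
    (le_div_iff₀ (hw_pos x hx)).mp (hmin hx)
  have hcd : c ≤ d := hz.1.trans hz.2
  have hx₀c : x₀ ≠ c := by
    rintro rfl
    exact (div_nonneg hgc (hw_pos x₀ hx₀).le).not_gt hlam
  have hx₀d : x₀ ≠ d := by
    rintro rfl
    exact (div_nonneg hgd (hw_pos x₀ hx₀).le).not_gt hlam
  have hx₀' : x₀ ∈ Ioo c d := ⟨hx₀.1.lt_of_ne' hx₀c, hx₀.2.lt_of_ne hx₀d⟩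
  have hgx₀ : g x₀ = lam * w x₀ := (div_mul_cancel₀ _ (hw_pos x₀ hx₀).ne').symm
  refine ⟨x₀, hx₀', lam, hlam, hgx₀, ?_⟩
  filter_upwards [isOpen_Ioo.mem_nhds hx₀'] with x hx
  rw [hgx₀, sub_self, sub_nonneg]
  exact hlam_le x (Ioo_subset_Icc_self hx)

theorem nonneg_of_secondOrderOp_nonpos {a1 a0 g w : ℝ → ℝ} {c d : ℝ}
    (hg : ContinuousOn g (Icc c d)) (hg2 : ContDiffOn ℝ 2 g (Ioo c d))
    (hw : ContinuousOn w (Icc c d)) (hw2 : ContDiffOn ℝ 2 w (Ioo c d))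
    (hw_pos : ∀ x ∈ Icc c d, 0 < w x) (hLw : ∀ x ∈ Ioo c d, secondOrderOp a1 a0 w x < 0)
    (hLg : ∀ x ∈ Ioo c d, secondOrderOp a1 a0 g x ≤ 0) (hgc : 0 ≤ g c) (hgd : 0 ≤ g d) :
    ∀ x ∈ Icc c d, 0 ≤ g x := by
  by_contra! hneg
  obtain ⟨x₀, hx₀, lam, hlam, hgx₀, hmin⟩ :=
    exists_isLocalMin_sub_mul_of_neg hg hw hw_pos hgc hgd hneg
  have hg₀ : ContDiffAt ℝ 2 g x₀ := hg2.contDiffAt (isOpen_Ioo.mem_nhds hx₀)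
  have hw₀ : ContDiffAt ℝ 2 w x₀ := hw2.contDiffAt (isOpen_Ioo.mem_nhds hx₀)
  have hL : 0 ≤ secondOrderOp a1 a0 g x₀ - lam * secondOrderOp a1 a0 w x₀ := by
    rw [← secondOrderOp_sub_mul a1 a0 lam hg₀ hw₀]
    exact hmin.secondOrderOp_nonneg a1 a0 (hg₀.continuousAt.sub (hw₀.continuousAt.const_mul lam))
      (sub_eq_zero.mpr hgx₀)
  nlinarith [hLg x₀ hx₀, hLw x₀ hx₀]

theorem secondOrderOp_one_sub_mul_sq_neg {a1 a0 : ℝ → ℝ} {C c x : ℝ} (hC : 0 < C)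
    (ha1 : |a1 x| ≤ C) (ha0 : |a0 x| ≤ C) (hx : 0 ≤ x - c) (hxC : 2 * C * (x - c) < 1)
    (hw : 0 ≤ 1 - C * (x - c) ^ 2) :
    secondOrderOp a1 a0 (fun y => 1 - C * (y - c) ^ 2) x < 0 := by
  have hderiv : deriv (fun y => 1 - C * (y - c) ^ 2) = fun y => -(2 * C * (y - c)) := by
    funext y
    exact ((((hasDerivAt_id y).sub_const c).fun_pow 2).const_mul C |>.const_sub 1).deriv.trans
      (by simp; ring)
  have hderiv2 : deriv (fun y => -(2 * C * (y - c))) x = -(2 * C) :=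
    ((((hasDerivAt_id x).sub_const c).const_mul (2 * C)).neg).deriv.trans (by simp)
  rw [secondOrderOp_eq, hderiv, hderiv2]
  dsimp only
  obtain ⟨ha1l, -⟩ := abs_le.mp ha1
  obtain ⟨-, ha0u⟩ := abs_le.mp ha0
  nlinarith [mul_nonneg (neg_le_iff_add_nonneg.mp ha1l) (mul_nonneg hC.le hx),
    mul_nonneg (sub_nonneg.mpr ha0u) hw, mul_pos hC (sub_pos.mpr hxC), mul_nonneg hC.le (sq_nonneg (x - c))]

/-- Maximum principle on small intervals for second order differential
inequalities with bounded coefficients: δ depends only on the bound C. -/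
theorem stmt_1 (C : ℝ) (hC : 0 < C) :
    ∃ δ > (0 : ℝ), ∀ (a b : ℝ), a < b →
      ∀ (a1 a0 g : ℝ → ℝ),
        ContDiffOn ℝ 2 g (Set.Ioo a b) →
        ContDiffOn ℝ 1 g (Set.Ico a b) →
        (∀ x ∈ Set.Ico a b, |a1 x| ≤ C) →
        (∀ x ∈ Set.Ico a b, |a0 x| ≤ C) →
        (∀ x ∈ Set.Ioo a b,
          iteratedDeriv 2 g x + a1 x * deriv g x + a0 x * g x ≤ 0) →
        ∀ c d : ℝ, Set.Icc c d ⊆ Set.Ico a b → d - c < δ →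
          0 ≤ g c → 0 ≤ g d → ∀ x ∈ Set.Icc c d, 0 ≤ g x := by
  refine ⟨min (1 / (2 * C)) 1, by positivity, ?_⟩
  intro a b hab a1 a0 g hg2 hg1 ha1 ha0 hLg c d hsub hdc hgc hgd
  have hdC : 2 * C * (d - c) < 1 := by
    have := hdc.trans_le (min_le_left _ _)
    rwa [lt_div_iff₀ (by positivity), mul_comm] at this
  have hd1 : d - c < 1 := hdc.trans_le (min_le_right _ _)
  have hsmall : ∀ x ∈ Icc c d, 0 ≤ x - c ∧ 2 * C * (x - c) < 1 ∧ 0 < 1 - C * (x - c) ^ 2 := by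
    intro x ⟨hcx, hxd⟩
    refine ⟨sub_nonneg.mpr hcx, by nlinarith, ?_⟩
    nlinarith [mul_nonneg hC.le (sub_nonneg.mpr hcx)]
  have hIoo : Ioo c d ⊆ Ioo a b := fun x hx =>
    ⟨(hsub ⟨le_rfl, (hx.1.trans hx.2).le⟩).1.trans_lt hx.1, (hsub (Ioo_subset_Icc_self hx)).2⟩
  refine nonneg_of_secondOrderOp_nonpos (a1 := a1) (a0 := a0)
    (w := fun x => 1 - C * (x - c) ^ 2) (hg1.continuousOn.mono hsub) (hg2.mono hIoo)
    (by fun_prop) (by fun_prop) (fun x hx => (hsmall x hx).2.2) (fun x hx => ?_)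
    (fun x hx => hLg x (hIoo hx)) hgc hgd
  obtain ⟨hx0, hxC, hw⟩ := hsmall x (Ioo_subset_Icc_self hx)
  have hx' : x ∈ Ico a b := hsub (Ioo_subset_Icc_self hx)
  exact secondOrderOp_one_sub_mul_sq_neg hC (ha1 x hx') (ha0 x hx') hx0 hxC hw.le
end

section
/- Fix n ≥ 3 and α with 0 < α < 1. Define β = nα/(1-α), λₙ = [(β+n)(β+n-1)⋯(β+1)]^{1/(α-1)}, and u(x) = (−1)^{n-1}λₙ(−x)^{n/(1-α)} for x < 0 and u(x) = −λₙ x^{n/(1-α)} for x ≥ 0. Then u is n times differentiable on ℝ and u⁽ⁿ⁾(x) = −|u(x)|^α for all x ∈ ℝ. -/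
/-!
With `q = n / (1 - α) = β + n`, `u` is a two-sided power `c (-x)^q` / `d x^q`. Differentiating
keeps this shape and lowers the exponent by one; as long as the exponent exceeds `1`, both
one-sided derivatives vanish at `0`, so `u` is `n` times differentiable. After `n` steps the
exponent is `β = q α` and the coefficient is `-λ ∏_{j=1}^n (β + j)`, which equals `-λ^α` by the
choice of `λ`; this is exactly `-|u|^α`.
-/

open Finset

noncomputable def splitRpow (c d q x : ℝ) : ℝ := if x < 0 then c * (-x) ^ q else d * x ^ q

lemma splitRpow_of_neg {c d q x : ℝ} (hx : x < 0) : splitRpow c d q x = c * (-x) ^ q := if_pos hx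

lemma splitRpow_of_nonneg {c d q x : ℝ} (hx : 0 ≤ x) : splitRpow c d q x = d * x ^ q :=
  if_neg hx.not_gt

lemma splitRpow_zero (c d : ℝ) {q : ℝ} (hq : q ≠ 0) : splitRpow c d q 0 = 0 := by
  rw [splitRpow_of_nonneg le_rfl, Real.zero_rpow hq, mul_zero]

lemma splitRpow_self (c q x : ℝ) : splitRpow c c q x = c * |x| ^ q := by
  rcases lt_or_ge x 0 with hx | hx
  · rw [splitRpow_of_neg hx, abs_of_neg hx]
  · rw [splitRpow_of_nonneg hx, abs_of_nonneg hx]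

lemma abs_splitRpow (c d q x : ℝ) : |splitRpow c d q x| = splitRpow |c| |d| q x := by
  rcases lt_or_ge x 0 with hx | hx
  · rw [splitRpow_of_neg hx, splitRpow_of_neg hx, abs_mul,
      abs_of_nonneg (Real.rpow_nonneg (neg_nonneg.2 hx.le) q)]
  · rw [splitRpow_of_nonneg hx, splitRpow_of_nonneg hx, abs_mul,
      abs_of_nonneg (Real.rpow_nonneg hx q)]

lemma hasDerivAt_splitRpow {q : ℝ} (hq : 1 < q) (c d x : ℝ) :
    HasDerivAt (splitRpow c d q) (splitRpow (-(c * q)) (d * q) (q - 1) x) x := by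
  have hleft (y : ℝ) : HasDerivAt (fun y => c * (-y) ^ q) (-(c * q) * (-y) ^ (q - 1)) y :=
    (((Real.hasDerivAt_rpow_const (x := -y) (Or.inr hq.le)).comp y
      (hasDerivAt_neg y)).const_mul c).congr_deriv (by ring)
  have hright (y : ℝ) : HasDerivAt (fun y => d * y ^ q) (d * q * y ^ (q - 1)) y :=
    ((Real.hasDerivAt_rpow_const (x := y) (Or.inr hq.le)).const_mul d).congr_deriv (by ring)
  rcases lt_trichotomy x 0 with hx | rfl | hx
  · rw [splitRpow_of_neg hx]
    exact (hleft x).congr_of_eventuallyEq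
      (Filter.eventually_of_mem (Iio_mem_nhds hx) fun y hy => splitRpow_of_neg hy)
  · have hq0 : q ≠ 0 := by linarith
    have hq1 : q - 1 ≠ 0 := by linarith
    have hzero : (0 : ℝ) ^ (q - 1) = 0 := Real.zero_rpow hq1
    rw [splitRpow_zero _ _ hq1]
    have hIic : HasDerivWithinAt (splitRpow c d q) 0 (Set.Iic 0) 0 := by
      have heq (y : ℝ) (hy : y ∈ Set.Iic 0) : splitRpow c d q y = c * (-y) ^ q := by
        rcases (Set.mem_Iic.1 hy).lt_or_eq with hy | rfl
        · exact splitRpow_of_neg hy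
        · rw [splitRpow_zero _ _ hq0, neg_zero, Real.zero_rpow hq0, mul_zero]
      exact ((hleft 0).hasDerivWithinAt.congr heq (heq 0 Set.self_mem_Iic)).congr_deriv
        (by simp [hzero])
    have hIci : HasDerivWithinAt (splitRpow c d q) 0 (Set.Ici 0) 0 :=
      ((hright 0).hasDerivWithinAt.congr (fun y hy => splitRpow_of_nonneg hy)
        (splitRpow_of_nonneg le_rfl)).congr_deriv (by simp [hzero])
    simpa only [Set.Iic_union_Ici, hasDerivWithinAt_univ] using hIic.union hIci
  · rw [splitRpow_of_nonneg hx.le]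
    exact (hright x).congr_of_eventuallyEq
      (Filter.eventually_of_mem (Ioi_mem_nhds hx) fun y hy => splitRpow_of_nonneg (le_of_lt hy))

lemma iteratedDeriv_splitRpow (c d q : ℝ) {k : ℕ} (hk : (k : ℝ) < q) :
    iteratedDeriv k (splitRpow c d q) =
      splitRpow ((-1) ^ k * (∏ j ∈ range k, (q - j)) * c) ((∏ j ∈ range k, (q - j)) * d)
        (q - k) := by
  induction k with
  | zero => simp
  | succ k ih =>
    push_cast at hk
    ext x
    rw [iteratedDeriv_succ, ih (by linarith),
      (hasDerivAt_splitRpow (by linarith) _ _ x).deriv, prod_range_succ, pow_succ]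
    congr 1 <;> push_cast <;> ring

lemma differentiable_iteratedDeriv_splitRpow (c d q : ℝ) {k : ℕ} (hk : (k : ℝ) + 1 < q) :
    Differentiable ℝ (iteratedDeriv k (splitRpow c d q)) := by
  rw [iteratedDeriv_splitRpow c d q (by linarith)]
  exact fun x => (hasDerivAt_splitRpow (by linarith) _ _ x).differentiableAt

lemma prod_range_add_sub_eq_prod_Icc {R : Type*} [CommRing R] (b : R) (n : ℕ) :
    ∏ j ∈ range n, (b + n - j) = ∏ j ∈ Icc 1 n, (b + j) := by
  induction n with
  | zero => simp
  | succ n ih =>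
    rw [prod_range_succ', prod_Icc_succ_top (by omega), ← ih]
    push_cast
    congr 1
    · exact prod_congr rfl fun j _ => by ring
    · ring

lemma rpow_one_div_sub_one_mul_self {P : ℝ} (hP : 0 < P) {α : ℝ} (hα : α ≠ 1) :
    P ^ (1 / (α - 1)) * P = (P ^ (1 / (α - 1))) ^ α := by
  have : 1 / (α - 1) * α = 1 / (α - 1) + 1 := by
    field_simp [sub_ne_zero.2 hα]
    ring
  rw [← Real.rpow_mul hP.le, this, Real.rpow_add hP, Real.rpow_one]

/-- The explicit sharpness example: u⁽ⁿ⁾ = -|u|^α. -/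
theorem stmt_13 (n : ℕ) (hn : 3 ≤ n) (α : ℝ) (hα0 : 0 < α) (hα1 : α < 1)
    (β lam : ℝ) (hβ : β = n * α / (1 - α))
    (hlam : lam = (∏ j ∈ Finset.Icc 1 n, (β + j)) ^ ((1 : ℝ) / (α - 1)))
    (u : ℝ → ℝ)
    (hu : u = fun x => if x < 0 then
        (-1 : ℝ) ^ (n - 1) * lam * (-x) ^ ((n : ℝ) / (1 - α))
      else
        -(lam * x ^ ((n : ℝ) / (1 - α)))) :
    (∀ k < n, Differentiable ℝ (iteratedDeriv k u)) ∧
    ∀ x : ℝ, iteratedDeriv n u x = -|u x| ^ α := by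
  have h1α : 0 < 1 - α := by linarith
  have hβ0 : 0 < β := by rw [hβ]; positivity
  have hexp : (n : ℝ) / (1 - α) = β + n := by rw [hβ]; field_simp; ring
  have hexp_mul : (β + n) * α = β := by rw [hβ]; field_simp; ring
  set P := ∏ j ∈ Icc 1 n, (β + j) with hP
  have hP0 : 0 < P := prod_pos fun j _ => by positivity
  have hlam0 : 0 < lam := hlam ▸ Real.rpow_pos_of_pos hP0 _
  have hlam_rpow : lam ^ α = lam * P := by
    rw [hlam, rpow_one_div_sub_one_mul_self hP0 hα1.ne]
  have hu_split : u = splitRpow ((-1) ^ (n - 1) * lam) (-lam) (β + n) := by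
    subst hu; ext x; simp only [splitRpow, hexp]; split_ifs <;> ring
  refine ⟨fun k hk => ?_, fun x => ?_⟩
  · have : (k : ℝ) + 1 ≤ n := by exact_mod_cast hk
    rw [hu_split]
    exact differentiable_iteratedDeriv_splitRpow _ _ _ (by linarith)
  · have habs : |u x| = lam * |x| ^ (β + n) := by
      rw [hu_split, abs_splitRpow, abs_mul, abs_pow, abs_neg, abs_one, one_pow, one_mul, abs_neg,
        abs_of_pos hlam0, splitRpow_self]
    have hsign : (-1 : ℝ) ^ n * (-1) ^ (n - 1) = -1 := by
      rw [← pow_add]; exact Odd.neg_one_pow ⟨n - 1, by omega⟩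
    have hcoef : (-1) ^ n * P * ((-1) ^ (n - 1) * lam) = -(lam * P) := by
      linear_combination lam * P * hsign
    rw [habs, Real.mul_rpow hlam0.le (by positivity), ← Real.rpow_mul (abs_nonneg x), hexp_mul,
      hlam_rpow, hu_split, iteratedDeriv_splitRpow _ _ _ (by linarith),
      prod_range_add_sub_eq_prod_Icc, ← hP, add_sub_cancel_right, hcoef,
      show P * -lam = -(lam * P) by ring, splitRpow_self, neg_mul]
end
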